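/- arXiv:2302.00466 — 3 statements merged into one kernel-verified Lean document; each statement's English description precedes it below -/
import Mathlib

section
/- Define b₁ = (1/√2)·sin(t/√2)cos(t/√2)/(cos²(t/√2)+sinh²(h/√2)) and b₂ = (1/√2)·sinh(h/√2)cosh(h/√2)/(cos²(t/√2)+sinh²(h/√2)), and set a₁ = cos(t/√2)·cosh(h/√2), a₂ = sin(t/√2)·sinh(h/√2). Then (a₁ + i·a₂)² · (2(b₁ − i·b₂)² + 1) = 1. -/
/-!
With `x = t/√2`, `y = h/√2` and `w = x - y i`, the addition formulas give `a₁ + i a₂ = cos w`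
and `√2 (b₁ - i b₂) = tan w`, the denominator being `cos w · cos w̄ = cos² x + sinh² y ≠ 0`.
The identity is then `cos² w · (tan² w + 1) = 1`.
-/

namespace Complex

theorem cos_sub_mul_I (x y : ℂ) : cos (x - y * I) = cos x * cosh y + I * (sin x * sinh y) := by
  rw [sub_eq_add_neg, ← neg_mul, cos_add_mul_I, cosh_neg, sinh_neg]
  ring

theorem sin_sub_mul_I (x y : ℂ) : sin (x - y * I) = sin x * cosh y - I * (cos x * sinh y) := by
  rw [sub_eq_add_neg, ← neg_mul, sin_add_mul_I, cosh_neg, sinh_neg]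
  ring

theorem cos_sub_mul_I_mul_cos_add_mul_I (x y : ℂ) :
    cos (x - y * I) * cos (x + y * I) = cos x ^ 2 + sinh y ^ 2 := by
  rw [cos_sub_mul_I, cos_add_mul_I]
  linear_combination -(sin x * sinh y) ^ 2 * I_sq + cos x ^ 2 * cosh_sq_sub_sinh_sq y
    + sinh y ^ 2 * cos_sq_add_sin_sq x

theorem sin_sub_mul_I_mul_cos_add_mul_I (x y : ℂ) :
    sin (x - y * I) * cos (x + y * I) = sin x * cos x - I * (sinh y * cosh y) := by
  rw [sin_sub_mul_I, cos_add_mul_I]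
  linear_combination sin x * cos x * sinh y ^ 2 * I_sq + sin x * cos x * cosh_sq_sub_sinh_sq y
    - I * (sinh y * cosh y) * sin_sq_add_cos_sq x

theorem tan_sub_mul_I {x y : ℂ} (hxy : cos x ^ 2 + sinh y ^ 2 ≠ 0) :
    tan (x - y * I) = (sin x * cos x - I * (sinh y * cosh y)) / (cos x ^ 2 + sinh y ^ 2) := by
  rw [tan_eq_sin_div_cos, ← sin_sub_mul_I_mul_cos_add_mul_I, ← cos_sub_mul_I_mul_cos_add_mul_I,
    mul_div_mul_right]
  exact right_ne_zero_of_mul (by rwa [cos_sub_mul_I_mul_cos_add_mul_I])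

theorem cos_sq_mul_tan_sq_add_one {z : ℂ} (hz : cos z ≠ 0) : cos z ^ 2 * (tan z ^ 2 + 1) = 1 := by
  linear_combination (tan z * cos z + sin z) * tan_mul_cos hz + sin_sq_add_cos_sq z

end Complex

open Complex

/-- With `b₁, b₂` the Case-3 shape-operator components and
`a₁ = cos(t/√2)cosh(h/√2)`, `a₂ = sin(t/√2)sinh(h/√2)`, one has
`(a₁ + i a₂)²·(2(b₁ − i b₂)² + 1) = 1`. -/
theorem stmt_7 (t h : ℝ)
    (hden : Real.cos (t / Real.sqrt 2) ^ 2 + Real.sinh (h / Real.sqrt 2) ^ 2 ≠ 0) :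
    let b₁ : ℝ := (1 / Real.sqrt 2) * (Real.sin (t / Real.sqrt 2) * Real.cos (t / Real.sqrt 2)) /
      (Real.cos (t / Real.sqrt 2) ^ 2 + Real.sinh (h / Real.sqrt 2) ^ 2)
    let b₂ : ℝ := (1 / Real.sqrt 2) * (Real.sinh (h / Real.sqrt 2) * Real.cosh (h / Real.sqrt 2)) /
      (Real.cos (t / Real.sqrt 2) ^ 2 + Real.sinh (h / Real.sqrt 2) ^ 2)
    let a₁ : ℝ := Real.cos (t / Real.sqrt 2) * Real.cosh (h / Real.sqrt 2)
    let a₂ : ℝ := Real.sin (t / Real.sqrt 2) * Real.sinh (h / Real.sqrt 2)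
    ((a₁ : ℂ) + Complex.I * a₂) ^ 2 * (2 * ((b₁ : ℂ) - Complex.I * b₂) ^ 2 + 1) = 1 := by
  generalize t / Real.sqrt 2 = x at hden ⊢
  generalize h / Real.sqrt 2 = y at hden ⊢
  intro b₁ b₂ a₁ a₂
  set w : ℂ := x - y * I
  have hden' : cos x ^ 2 + sinh y ^ 2 ≠ 0 := by exact_mod_cast hden
  have ha : (a₁ : ℂ) + I * a₂ = cos w := by
    simp only [a₁, a₂, w, cos_sub_mul_I]
    push_cast
    ring
  have hb : (b₁ : ℂ) - I * b₂ = tan w / Real.sqrt 2 := by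
    simp only [b₁, b₂, w, tan_sub_mul_I hden']
    push_cast
    ring
  have hw : cos w ≠ 0 :=
    left_ne_zero_of_mul (b := cos (x + y * I)) (by rwa [cos_sub_mul_I_mul_cos_add_mul_I])
  have hsqrt : ((Real.sqrt 2 : ℝ) : ℂ) ^ 2 = 2 := by
    exact_mod_cast Real.sq_sqrt zero_le_two
  rw [ha, hb, div_pow, hsqrt, mul_div_cancel₀ _ two_ne_zero, cos_sq_mul_tan_sq_add_one hw]
end

section
/- Let a, b ∈ S² ⊂ ℝ³ be unit vectors and define M̂ = {(p,q) ∈ S²×S² : ⟨p,a⟩² + ⟨q,b⟩² = 1}. Let a = (0,0,1), b = (0,0,−1), and consider the map Ψ(t₁,t₂,t₃) = ( ((cos(t₁/√2)−sin(t₁/√2))/√2)·(cos t₂, sin t₂, 0) + ((cos(t₁/√2)+sin(t₁/√2))/√2)·a, ((cos(t₁/√2)+sin(t₁/√2))/√2)·(cos t₃, sin t₃, 0) + ((cos(t₁/√2)−sin(t₁/√2))/√2)·b ). Then Ψ maps ℝ³ into M̂, i.e., both components lie in S² and ⟨p,a⟩² + ⟨q,b⟩² = 1 for (p,q) = Ψ(t₁,t₂,t₃).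 -/
/-!
With `φ = t₁/√2 + π/4` the two coefficients are `cos φ = (cos(t₁/√2) − sin(t₁/√2))/√2` and
`sin φ = (cos(t₁/√2) + sin(t₁/√2))/√2`. Hence `p = cos φ · (cos t₂, sin t₂, 0) + sin φ · a` and
`q = sin φ · (cos t₃, sin t₃, 0) + cos φ · b` are unit vectors (combinations of orthonormal ones
with coefficients on the unit circle), and `⟨p,a⟩² + ⟨q,b⟩² = sin² φ + cos² φ = 1`.
-/

open Real

lemma cos_sub_sin_div_sqrt_two (x : ℝ) : (cos x - sin x) / √2 = cos (x + π / 4) := by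
  have h : √2 ≠ 0 := by positivity
  rw [cos_add, cos_pi_div_four, sin_pi_div_four]
  field_simp
  ring_nf
  rw [sq_sqrt zero_le_two]

lemma cos_add_sin_div_sqrt_two (x : ℝ) : (cos x + sin x) / √2 = sin (x + π / 4) := by
  have h : √2 ≠ 0 := by positivity
  rw [sin_add, cos_pi_div_four, sin_pi_div_four]
  field_simp
  ring_nf
  rw [sq_sqrt zero_le_two]

lemma sum_sq_horizontal_add_vertical (α β t z : ℝ) :
    ∑ i : Fin 3, (α * ![cos t, sin t, 0] i + β * ![0, 0, z] i) ^ 2 = α ^ 2 + (β * z) ^ 2 := by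
  simp only [Fin.sum_univ_three, Matrix.cons_val_zero, Matrix.cons_val_one, Matrix.cons_val_two,
    Matrix.head_cons, Matrix.tail_cons]
  linear_combination α ^ 2 * sin_sq_add_cos_sq t

lemma inner_horizontal_add_vertical (α β t z : ℝ) :
    ∑ i : Fin 3, (α * ![cos t, sin t, 0] i + β * ![0, 0, z] i) * ![0, 0, z] i = β * z ^ 2 := by
  simp only [Fin.sum_univ_three, Matrix.cons_val_zero, Matrix.cons_val_one, Matrix.cons_val_two,
    Matrix.head_cons, Matrix.tail_cons]
  ring

/-- The explicit parametrization `Ψ` maps `ℝ³` into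
`M̂ = {(p,q) ∈ S²×S² : ⟨p,a⟩² + ⟨q,b⟩² = 1}` with `a = (0,0,1)`, `b = (0,0,−1)`. -/
theorem stmt_12 (t₁ t₂ t₃ : ℝ) :
    let a : Fin 3 → ℝ := ![0, 0, 1]
    let b : Fin 3 → ℝ := ![0, 0, -1]
    let p : Fin 3 → ℝ := fun i =>
      ((Real.cos (t₁ / Real.sqrt 2) - Real.sin (t₁ / Real.sqrt 2)) / Real.sqrt 2) *
          (![Real.cos t₂, Real.sin t₂, 0] i) +
        ((Real.cos (t₁ / Real.sqrt 2) + Real.sin (t₁ / Real.sqrt 2)) / Real.sqrt 2) * a i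
    let q : Fin 3 → ℝ := fun i =>
      ((Real.cos (t₁ / Real.sqrt 2) + Real.sin (t₁ / Real.sqrt 2)) / Real.sqrt 2) *
          (![Real.cos t₃, Real.sin t₃, 0] i) +
        ((Real.cos (t₁ / Real.sqrt 2) - Real.sin (t₁ / Real.sqrt 2)) / Real.sqrt 2) * b i
    (∑ i, p i ^ 2 = 1) ∧ (∑ i, q i ^ 2 = 1) ∧
      (∑ i, p i * a i) ^ 2 + (∑ i, q i * b i) ^ 2 = 1 := by
  intro a b p q
  simp only [p, q, a, b, cos_sub_sin_div_sqrt_two, cos_add_sin_div_sqrt_two,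
    sum_sq_horizontal_add_vertical, inner_horizontal_add_vertical]
  have hφ := sin_sq_add_cos_sq (t₁ / √2 + π / 4)
  refine ⟨?_, ?_, ?_⟩ <;> linear_combination hφ
end

section
/- There are no real numbers κ < 0, C ∈ (−1,1), b₁, b₄, b₆ with b₆ ≠ 0 satisfying b₁b₄ = κ, b₁b₆ = κ − (1−C)/2, and b₄b₆ = κ − (1+C)/2. -/
/-! Multiplying the last two relations and using the first gives
`κ * b₆ ^ 2 = (κ - (1 - C) / 2) * (κ - (1 + C) / 2)`. For `κ < 0` and `|C| < 1` both factors on the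
right are negative, so the right side is positive, while the left side is not. -/

theorem mul_sq_eq_mul_of_pairwise_products {R : Type*} [CommRing R] {a b c k x y : R}
    (hab : a * b = k) (hac : a * c = x) (hbc : b * c = y) : k * c ^ 2 = x * y := by
  rw [← hab, ← hac, ← hbc]
  ring

/-- Nonexistence step: there are no real solutions with `κ < 0`, `C ∈ (−1,1)`,
`b₆ ≠ 0` to the curvature relations. -/
theorem stmt_19 :
    ¬ ∃ (κ C b₁ b₄ b₆ : ℝ), κ < 0 ∧ C ∈ Set.Ioo (-1 : ℝ) 1 ∧ b₆ ≠ 0 ∧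
      b₁ * b₄ = κ ∧ b₁ * b₆ = κ - (1 - C) / 2 ∧ b₄ * b₆ = κ - (1 + C) / 2 := by
  rintro ⟨κ, C, b₁, b₄, b₆, hκ, ⟨hC_gt, hC_lt⟩, -, h₁₄, h₁₆, h₄₆⟩
  have key := mul_sq_eq_mul_of_pairwise_products h₁₄ h₁₆ h₄₆
  have lhs_nonpos : κ * b₆ ^ 2 ≤ 0 := mul_nonpos_of_nonpos_of_nonneg hκ.le (sq_nonneg b₆)
  have rhs_pos : 0 < (κ - (1 - C) / 2) * (κ - (1 + C) / 2) :=
    mul_pos_of_neg_of_neg (by linarith) (by linarith)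
  linarith
end
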